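/- arXiv:2510.22007 — 4 statements merged into one kernel-verified Lean document; each statement's English description precedes it below -/
import Mathlib

section
/- Let X be uniform on [0,1] and, conditionally on X = x, let U be uniform on [Δx, 1 - Δ + Δx] for a fixed Δ ∈ (0,1). Then Y = |U - X| has probability density f(y) = (2/(1-Δ)) - 2y/(1-Δ)² for 0 < y < 1-Δ, and f(y) = 0 for y ≥ 1-Δ. -/
/-!
Conditionally on `X = x`, `U - X` is uniform on `[-(1-Δ)x, (1-Δ)(1-x)]`, an interval of length
`1 - Δ` around `0`, so `|U - X| ≤ t` has conditional probability
`(min((1-Δ)x, t) + min((1-Δ)(1-x), t)) / (1-Δ)`. Over `x ∈ [0,1]` both terms (exchanged by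
`x ↦ 1 - x`) average to `(1-Δ)⁻¹ ∫₀^{1-Δ} min(y, t) dy`, and the result is the distribution
function `2s/(1-Δ) - s²/(1-Δ)²`, `s = min(t, 1-Δ)`, of the triangular density.
-/

open MeasureTheory ProbabilityTheory Set
open scoped ENNReal

lemma setLIntegral_Ioc_ofReal_eq {f : ℝ → ℝ} {a b : ℝ} (hab : a ≤ b)
    (hf : IntegrableOn f (Ioc a b)) (hf_nonneg : ∀ x ∈ Ioc a b, 0 ≤ f x) :
    ∫⁻ x in Ioc a b, ENNReal.ofReal (f x) = ENNReal.ofReal (∫ x in a..b, f x) := by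
  rw [intervalIntegral.integral_of_le hab, ofReal_integral_eq_lintegral_ofReal hf
    ((ae_restrict_iff' measurableSet_Ioc).2 (.of_forall hf_nonneg))]

lemma integral_min_const {c t : ℝ} (hc : 0 ≤ c) (ht : 0 ≤ t) :
    ∫ y in (0 : ℝ)..c, min y t = c * min t c - min t c ^ 2 / 2 := by
  set s := min t c
  have hs : 0 ≤ s := le_min ht hc
  have hsc : s ≤ c := min_le_right t c
  have hint : ∀ a b : ℝ, IntervalIntegrable (fun y => min y t) volume a b :=
    fun a b => (continuous_id.min continuous_const).intervalIntegrable a b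
  have h₁ : ∫ y in (0 : ℝ)..s, min y t = ∫ y in (0 : ℝ)..s, y :=
    intervalIntegral.integral_congr fun y hy => by
      rw [uIcc_of_le hs] at hy
      exact min_eq_left (hy.2.trans (min_le_left t c))
  have h₂ : ∫ y in s..c, min y t = ∫ _ in s..c, s :=
    intervalIntegral.integral_congr fun y hy => by
      rw [uIcc_of_le hsc] at hy
      rcases le_total t c with htc | hct
      · simp only [s, min_eq_left htc] at hy ⊢
        exact min_eq_right hy.1
      · simp only [s, min_eq_right hct] at hy ⊢
        rw [min_eq_left (hy.2.trans hct)]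
        exact le_antisymm hy.2 hy.1
  rw [← intervalIntegral.integral_add_adjacent_intervals (hint 0 s) (hint s c), h₁, h₂,
    integral_id, intervalIntegral.integral_const, smul_eq_mul]
  ring

lemma integral_min_mul_sub_add_min_mul {c : ℝ} (hc : c ≠ 0) (t : ℝ) :
    ∫ x in (0 : ℝ)..1, (min (c * (1 - x)) t + min (c * x) t)
      = 2 / c * ∫ y in (0 : ℝ)..c, min y t := by
  rw [intervalIntegral.integral_add
      ((by fun_prop : Continuous fun x => min (c * (1 - x)) t).intervalIntegrable 0 1)
      ((by fun_prop : Continuous fun x => min (c * x) t).intervalIntegrable 0 1),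
    intervalIntegral.integral_comp_sub_left (fun x => min (c * x) t), sub_self, sub_zero,
    intervalIntegral.integral_comp_mul_left (fun y => min y t) hc, mul_zero, mul_one, smul_eq_mul]
  ring

lemma volume_Icc_inter_closedBall (x a b t : ℝ) :
    volume (Icc (x - a) (x + b) ∩ Metric.closedBall x t)
      = ENNReal.ofReal (min b t + min a t) := by
  rw [Real.closedBall_eq_Icc, Icc_inter_Icc, max_sub_sub_left, min_add_add_left, Real.volume_Icc]
  ring_nf

noncomputable def triangularDensity (c y : ℝ) : ℝ≥0∞ :=
  ENNReal.ofReal (if 0 < y ∧ y < c then 2 / c - 2 * y / c ^ 2 else 0)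

lemma triangularDensity_eq_indicator (c : ℝ) :
    triangularDensity c = (Ioo 0 c).indicator fun y => ENNReal.ofReal (2 / c - 2 * y / c ^ 2) := by
  ext y
  simp only [triangularDensity, indicator_apply, mem_Ioo]
  split_ifs <;> simp

lemma triangularDensity_of_nonpos {c y : ℝ} (hy : y ≤ 0) : triangularDensity c y = 0 := by
  simp [triangularDensity, hy.not_gt]

lemma setLIntegral_triangularDensity_Iic {c t : ℝ} (hc : 0 < c) (ht : 0 ≤ t) :
    ∫⁻ y in Iic t, triangularDensity c y
      = ENNReal.ofReal (2 * min t c / c - min t c ^ 2 / c ^ 2) := by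
  have hIoc : Ioc 0 c ∩ Iic t = Ioc 0 (min t c) := by
    ext y; simp only [mem_inter_iff, mem_Iic, mem_Ioc, le_min_iff]; tauto
  have hae : (Ioo 0 c ∩ Iic t : Set ℝ) =ᵐ[volume] Ioc 0 (min t c) :=
    hIoc ▸ Ioo_ae_eq_Ioc.inter Filter.EventuallyEq.rfl
  have hint : ∫ y in (0 : ℝ)..min t c, (2 / c - 2 * y / c ^ 2)
      = 2 * min t c / c - min t c ^ 2 / c ^ 2 := by
    rw [intervalIntegral.integral_sub intervalIntegrable_const
        ((by fun_prop : Continuous fun y : ℝ => 2 * y / c ^ 2).intervalIntegrable _ _),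
      intervalIntegral.integral_const, intervalIntegral.integral_div,
      intervalIntegral.integral_const_mul, integral_id, smul_eq_mul]
    ring
  rw [triangularDensity_eq_indicator, setLIntegral_indicator measurableSet_Ioo,
    setLIntegral_congr hae,
    setLIntegral_Ioc_ofReal_eq (le_min ht hc.le) (by fun_prop : Continuous _).integrableOn_Ioc
      fun y hy => ?_, hint]
  have : 2 * y / c ^ 2 ≤ 2 / c := by
    rw [div_le_div_iff₀ (by positivity) hc]; nlinarith [hy.2.trans (min_le_right t c)]
  linarith

def parallelogram (Δ : ℝ) : Set (ℝ × ℝ) :=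
  {p | p.1 ∈ Icc 0 1 ∧ p.2 ∈ Icc (Δ * p.1) (1 - Δ + Δ * p.1)}

lemma measurableSet_parallelogram (Δ : ℝ) : MeasurableSet (parallelogram Δ) :=
  measurableSet_region_between_cc (f := fun x => Δ * x) (g := fun x => 1 - Δ + Δ * x)
    (by fun_prop) (by fun_prop) measurableSet_Icc

lemma preimage_mk_parallelogram_inter_abs_sub_le {Δ x : ℝ} (hx : x ∈ Icc 0 1) (t : ℝ) :
    Prod.mk x ⁻¹' (parallelogram Δ ∩ {p | |p.2 - p.1| ≤ t})
      = Icc (x - (1 - Δ) * x) (x + (1 - Δ) * (1 - x)) ∩ Metric.closedBall x t := by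
  rw [show x + (1 - Δ) * (1 - x) = 1 - Δ + Δ * x by ring, show x - (1 - Δ) * x = Δ * x by ring]
  ext u
  simp only [parallelogram, mem_preimage, mem_inter_iff, mem_ofPred_eq, Metric.mem_closedBall,
    Real.dist_eq, hx, true_and]

lemma volume_parallelogram_inter_abs_sub_le {Δ t : ℝ} (hΔ : Δ < 1) (ht : 0 ≤ t) :
    volume (parallelogram Δ ∩ {p | |p.2 - p.1| ≤ t})
      = ENNReal.ofReal (2 / (1 - Δ) * ∫ y in (0 : ℝ)..(1 - Δ), min y t) := by
  have hc : 0 < 1 - Δ := sub_pos.2 hΔ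
  have hsection : ∀ x, volume (Prod.mk x ⁻¹' (parallelogram Δ ∩ {p | |p.2 - p.1| ≤ t}))
      = (Icc 0 1).indicator
          (fun x => ENNReal.ofReal (min ((1 - Δ) * (1 - x)) t + min ((1 - Δ) * x) t)) x := by
    intro x
    by_cases hx : x ∈ Icc 0 1
    · rw [indicator_of_mem hx, preimage_mk_parallelogram_inter_abs_sub_le hx,
        volume_Icc_inter_closedBall]
    · rw [indicator_of_notMem hx]
      exact measure_mono_null (fun u hu => absurd hu.1.1 hx) measure_empty
  rw [Measure.volume_eq_prod, Measure.prod_apply ((measurableSet_parallelogram Δ).inter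
      (measurableSet_le (by fun_prop) measurable_const)),
    lintegral_congr hsection, lintegral_indicator measurableSet_Icc,
    setLIntegral_congr Ioc_ae_eq_Icc.symm,
    setLIntegral_Ioc_ofReal_eq zero_le_one (by fun_prop : Continuous _).integrableOn_Ioc
      fun x hx => ?_, integral_min_mul_sub_add_min_mul hc.ne']
  exact add_nonneg (le_min (mul_nonneg hc.le (sub_nonneg.2 hx.2)) ht)
    (le_min (mul_nonneg hc.le hx.1.le) ht)

-- Spelled as in `stmt1`, so that `hjoint` is about `jointDensity Δ` up to defeq.
noncomputable def jointDensity (Δ : ℝ) (p : ℝ × ℝ) : ℝ≥0∞ :=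
  ENNReal.ofReal
    (if p.1 ∈ Icc (0:ℝ) 1 ∧ p.2 ∈ Icc (Δ * p.1) (1 - Δ + Δ * p.1)
      then (1 - Δ)⁻¹ else 0)

lemma jointDensity_eq_indicator (Δ : ℝ) :
    jointDensity Δ = (parallelogram Δ).indicator fun _ => ENNReal.ofReal (1 - Δ)⁻¹ := by
  ext p
  simp only [jointDensity, parallelogram, indicator_apply, mem_ofPred_eq]
  split_ifs <;> simp

lemma withDensity_jointDensity_abs_sub_le {Δ t : ℝ} (hΔ : Δ < 1) (ht : 0 ≤ t) :
    volume.withDensity (jointDensity Δ) {p | |p.2 - p.1| ≤ t}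
      = ENNReal.ofReal (2 * min t (1 - Δ) / (1 - Δ) - min t (1 - Δ) ^ 2 / (1 - Δ) ^ 2) := by
  have hc : 0 < 1 - Δ := sub_pos.2 hΔ
  rw [withDensity_apply _ (measurableSet_le (by fun_prop) measurable_const),
    jointDensity_eq_indicator, setLIntegral_indicator (measurableSet_parallelogram Δ),
    setLIntegral_const, volume_parallelogram_inter_abs_sub_le hΔ ht,
    integral_min_const hc.le ht, ← ENNReal.ofReal_mul (inv_nonneg.2 hc.le)]
  congr 1
  field_simp

/-- Let `X` be uniform on `[0,1]` and, conditionally on `X = x`, let `U` be uniform on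
`[Δx, 1-Δ+Δx]` for a fixed `Δ ∈ (0,1)` (so the joint density of `(X,U)` is
`(1-Δ)⁻¹` on `{(x,u) : x ∈ [0,1], Δx ≤ u ≤ 1-Δ+Δx}`).  Then `Y = |U - X|` has density
`f(y) = 2/(1-Δ) - 2y/(1-Δ)²` for `0 < y < 1-Δ` and `f(y) = 0` otherwise. -/
theorem stmt1
    {Ω : Type*} [MeasureSpace Ω] [IsProbabilityMeasure (ℙ : Measure Ω)]
    (Δ : ℝ) (hΔ : Δ ∈ Ioo (0:ℝ) 1)
    (X U : Ω → ℝ) (hX : Measurable X) (hU : Measurable U)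
    (hjoint : Measure.map (fun ω => (X ω, U ω)) ℙ
      = (volume : Measure (ℝ × ℝ)).withDensity
          (fun p => ENNReal.ofReal
            (if p.1 ∈ Icc (0:ℝ) 1 ∧ p.2 ∈ Icc (Δ * p.1) (1 - Δ + Δ * p.1)
              then (1 - Δ)⁻¹ else 0))) :
    Measure.map (fun ω => |U ω - X ω|) ℙ
      = volume.withDensity
          (fun y => ENNReal.ofReal
            (if 0 < y ∧ y < 1 - Δ then 2 / (1 - Δ) - 2 * y / (1 - Δ)^2 else 0)) := by
  change _ = volume.withDensity (triangularDensity (1 - Δ))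
  have hc : 0 < 1 - Δ := sub_pos.2 hΔ.2
  have hY : Measurable fun p : ℝ × ℝ => |p.2 - p.1| := by fun_prop
  have hXU : Measure.map (fun ω => (X ω, U ω)) ℙ = volume.withDensity (jointDensity Δ) :=
    hjoint
  have hlaw : Measure.map (fun ω => |U ω - X ω|) ℙ
      = Measure.map (fun p : ℝ × ℝ => |p.2 - p.1|) (volume.withDensity (jointDensity Δ)) := by
    rw [← hXU, Measure.map_map hY (hX.prodMk hU)]
    rfl
  have : IsProbabilityMeasure (Measure.map (fun ω => |U ω - X ω|) ℙ) :=
    Measure.isProbabilityMeasure_map (by fun_prop)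
  refine Measure.ext_of_Iic _ _ fun t => ?_
  rw [hlaw, Measure.map_apply hY measurableSet_Iic, withDensity_apply _ measurableSet_Iic]
  rcases lt_or_ge t 0 with ht | ht
  · have hempty : (fun p : ℝ × ℝ => |p.2 - p.1|) ⁻¹' Iic t = ∅ :=
      eq_empty_of_forall_notMem fun p hp => (abs_nonneg _).not_gt (lt_of_le_of_lt hp ht)
    rw [hempty, measure_empty, setLIntegral_congr_fun measurableSet_Iic
      fun y hy => triangularDensity_of_nonpos (hy.trans ht.le), lintegral_zero]
  · exact (withDensity_jointDensity_abs_sub_le hΔ.2 ht).trans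
      (setLIntegral_triangularDensity_Iic hc ht).symm
end

section
/- For m ≥ 2 and 1/2 < Δ < 1, the integral I_m(Δ) = ∫_{[0,1]^m} max(1 - Δ - Δ·(max_i x_i - min_i x_i), 0) dx equals ((1-Δ)/Δ)^m · (1 - 2m(1-Δ)/(m+1)). -/
open MeasureTheory Set

/-!
With `r = (1 - Δ) / Δ`, the integrand is `Δ` times the length of `[max x - r, min x]`, i.e. of the
set of `s` with `s ≤ xᵢ ≤ s + r` for all `i`. Exchanging the order of integration (Tonelli), for
fixed `s` the admissible `x` form a cube with side the length of `[0, 1] ∩ [s, s + r]`, so the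
integral is `Δ ∫ |[0, 1] ∩ [s, s + r]|ᵐ ds`, and this one-dimensional integral splits into a
rising ramp, a plateau of height `r` (this is where `r ≤ 1` enters) and a falling ramp.
-/

theorem lintegral_volume_Icc_sup'_sub_inf' {ι : Type*} [Fintype ι] [Nonempty ι] {K : Set ℝ}
    (hK : MeasurableSet K) (r : ℝ) :
    ∫⁻ x in univ.pi (fun _ : ι => K), volume (Icc (Finset.univ.sup' Finset.univ_nonempty x - r)
        (Finset.univ.inf' Finset.univ_nonempty x))
      = ∫⁻ s, volume (K ∩ Icc s (s + r)) ^ Fintype.card ι := by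
  set B : Set ((ι → ℝ) × ℝ) := {p | ∀ i, p.1 i ∈ K ∩ Icc p.2 (p.2 + r)}
  have hB : MeasurableSet B := by
    simp only [B, ofPred_forall, mem_inter_iff, mem_Icc, ofPred_and]
    refine MeasurableSet.iInter fun i => ?_
    have hi : Measurable fun p : (ι → ℝ) × ℝ => p.1 i :=
      (measurable_pi_apply i).comp measurable_fst
    exact (hi hK).inter ((measurableSet_le measurable_snd hi).inter
      (measurableSet_le hi (measurable_snd.add_const r)))
  have slice_fst : ∀ x ∈ univ.pi fun _ => K, Prod.mk x ⁻¹' B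
      = Icc (Finset.univ.sup' Finset.univ_nonempty x - r)
          (Finset.univ.inf' Finset.univ_nonempty x) := by
    intro x hx
    ext s
    simp only [B, mem_preimage, mem_ofPred_eq, mem_inter_iff, mem_Icc, sub_le_iff_le_add,
      Finset.sup'_le_iff, Finset.le_inf'_iff, Finset.mem_univ, forall_const]
    have hxK := fun i => hx i (mem_univ i)
    grind
  have slice_fst_of_notMem : ∀ x ∉ univ.pi fun _ => K, Prod.mk x ⁻¹' B = ∅ := by
    intro x hx
    exact eq_empty_of_forall_notMem fun s hs => hx fun i _ => (hs i).1
  have slice_snd : ∀ s, (fun x => (x, s)) ⁻¹' B = univ.pi fun _ => K ∩ Icc s (s + r) := by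
    intro s; ext x; simp [B]
  calc _ = ∫⁻ x, volume (Prod.mk x ⁻¹' B) := by
        rw [← lintegral_indicator (MeasurableSet.univ_pi fun _ => hK)]
        congr 1 with x
        by_cases hx : x ∈ univ.pi fun _ => K
        · rw [indicator_of_mem hx, slice_fst x hx]
        · rw [indicator_of_notMem hx, slice_fst_of_notMem x hx, measure_empty]
    _ = volume B := by rw [Measure.volume_eq_prod, Measure.prod_apply hB]
    _ = ∫⁻ s, volume ((fun x => (x, s)) ⁻¹' B) := by
        rw [Measure.volume_eq_prod, Measure.prod_apply_symm hB]
    _ = _ := by simp_rw [slice_snd, volume_pi_pi, Finset.prod_const, Finset.card_univ]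

def unitOverlap (r s : ℝ) : ℝ := max (min 1 (s + r) - max 0 s) 0

theorem volume_Icc_inter_Icc_eq_ofReal_unitOverlap (r s : ℝ) :
    volume (Icc (0:ℝ) 1 ∩ Icc s (s + r)) = ENNReal.ofReal (unitOverlap r s) := by
  rw [Icc_inter_Icc, Real.volume_Icc, unitOverlap, ENNReal.ofReal_max, ENNReal.ofReal_zero,
    max_eq_left zero_le]

theorem continuous_unitOverlap (r : ℝ) : Continuous (unitOverlap r) := by
  unfold unitOverlap; fun_prop

theorem unitOverlap_eq_zero_of_notMem {r s : ℝ} (hs : s ∉ Ioc (-r) 1) : unitOverlap r s = 0 := by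
  rw [mem_Ioc, not_and_or, not_lt, not_le] at hs
  refine max_eq_right ?_
  rcases hs with hs | hs
  · linarith [min_le_right 1 (s + r), le_max_left 0 s]
  · linarith [min_le_left 1 (s + r), le_max_right 0 s]

theorem unitOverlap_of_le_zero {r s : ℝ} (hr : r ≤ 1) (h₁ : -r ≤ s) (h₂ : s ≤ 0) :
    unitOverlap r s = s + r := by
  rw [unitOverlap, min_eq_right (by linarith), max_eq_left h₂, sub_zero, max_eq_left (by linarith)]

theorem unitOverlap_of_le_one_sub {r s : ℝ} (hr : 0 ≤ r) (h₁ : 0 ≤ s) (h₂ : s ≤ 1 - r) :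
    unitOverlap r s = r := by
  rw [unitOverlap, min_eq_right (by linarith), max_eq_right h₁, add_sub_cancel_left, max_eq_left hr]

theorem unitOverlap_of_one_sub_le {r s : ℝ} (hr : r ≤ 1) (h₁ : 1 - r ≤ s) (h₂ : s ≤ 1) :
    unitOverlap r s = 1 - s := by
  rw [unitOverlap, min_eq_left (by linarith), max_eq_right (show 0 ≤ s by linarith),
    max_eq_left (by linarith)]

theorem support_unitOverlap_pow_subset (r : ℝ) {m : ℕ} (hm : m ≠ 0) :
    Function.support (fun s => unitOverlap r s ^ m) ⊆ Ioc (-r) 1 := fun s hs => by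
  by_contra h
  exact hs (by simp [unitOverlap_eq_zero_of_notMem h, hm])

theorem integrable_unitOverlap_pow (r : ℝ) {m : ℕ} (hm : m ≠ 0) :
    Integrable fun s => unitOverlap r s ^ m :=
  ((continuous_unitOverlap r).pow m).integrable_of_hasCompactSupport <|
    HasCompactSupport.of_support_subset_isCompact isCompact_Icc <|
      (support_unitOverlap_pow_subset r hm).trans Ioc_subset_Icc_self

theorem integral_unitOverlap_pow {r : ℝ} (hr₀ : 0 ≤ r) (hr₁ : r ≤ 1) {m : ℕ} (hm : m ≠ 0) :
    ∫ s, unitOverlap r s ^ m = 2 * (r ^ (m + 1) / (m + 1)) + (1 - r) * r ^ m := by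
  have hii : ∀ a b : ℝ, IntervalIntegrable (fun s => unitOverlap r s ^ m) volume a b :=
    fun a b => ((continuous_unitOverlap r).pow m).intervalIntegrable a b
  have left : ∫ s in (-r)..0, unitOverlap r s ^ m = r ^ (m + 1) / (m + 1) := by
    rw [intervalIntegral.integral_congr (g := fun s => (s + r) ^ m) fun s hs => by
      rw [uIcc_of_le (by linarith)] at hs
      simp only [unitOverlap_of_le_zero hr₁ hs.1 hs.2]]
    simp [intervalIntegral.integral_comp_add_right (fun u => u ^ m), integral_pow]
  have middle : ∫ s in (0:ℝ)..(1 - r), unitOverlap r s ^ m = (1 - r) * r ^ m := by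
    rw [intervalIntegral.integral_congr (g := fun _ => r ^ m) fun s hs => by
      rw [uIcc_of_le (by linarith)] at hs
      simp only [unitOverlap_of_le_one_sub hr₀ hs.1 hs.2]]
    simp
  have right : ∫ s in (1 - r)..1, unitOverlap r s ^ m = r ^ (m + 1) / (m + 1) := by
    rw [intervalIntegral.integral_congr (g := fun s => (1 - s) ^ m) fun s hs => by
      rw [uIcc_of_le (by linarith)] at hs
      simp only [unitOverlap_of_one_sub_le hr₁ hs.1 hs.2]]
    simp [intervalIntegral.integral_comp_sub_left (fun u => u ^ m), integral_pow]
  rw [← intervalIntegral.integral_eq_integral_of_support_subset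
      (support_unitOverlap_pow_subset r hm),
    ← intervalIntegral.integral_add_adjacent_intervals (hii _ (1 - r)) (hii _ _),
    ← intervalIntegral.integral_add_adjacent_intervals (hii _ 0) (hii _ _), left, middle, right]
  ring

theorem lintegral_volume_Icc_inter_Icc_pow {r : ℝ} (hr₀ : 0 ≤ r) (hr₁ : r ≤ 1) {m : ℕ}
    (hm : m ≠ 0) :
    ∫⁻ s, volume (Icc (0:ℝ) 1 ∩ Icc s (s + r)) ^ m
      = ENNReal.ofReal (2 * (r ^ (m + 1) / (m + 1)) + (1 - r) * r ^ m) := by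
  have hnonneg : ∀ s, 0 ≤ unitOverlap r s := fun s => le_max_right _ _
  simp_rw [volume_Icc_inter_Icc_eq_ofReal_unitOverlap, ← ENNReal.ofReal_pow (hnonneg _)]
  rw [← ofReal_integral_eq_lintegral_ofReal, integral_unitOverlap_pow hr₀ hr₁ hm]
  · exact integrable_unitOverlap_pow r hm
  · exact Filter.Eventually.of_forall fun s => pow_nonneg (hnonneg s) m

theorem ofReal_max_one_sub_sub_mul_eq_mul_volume_Icc {Δ : ℝ} (hΔ : 0 < Δ) (a b : ℝ) :
    ENNReal.ofReal (max (1 - Δ - Δ * (b - a)) 0)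
      = ENNReal.ofReal Δ * volume (Icc (b - (1 - Δ) / Δ) a) := by
  rw [Real.volume_Icc, ← ENNReal.ofReal_mul hΔ.le, ENNReal.ofReal_max, ENNReal.ofReal_zero,
    max_eq_left zero_le]
  congr 1
  field_simp
  ring

/-- For `m ≥ 2` and `1/2 < Δ < 1`,
`I_m(Δ) = ∫_{[0,1]^m} max(1 - Δ - Δ(max_i x_i - min_i x_i), 0) dx
        = ((1-Δ)/Δ)^m · (1 - 2m(1-Δ)/(m+1))`. -/
theorem stmt7 (m : ℕ) (hm : 2 ≤ m) (Δ : ℝ) (hΔ0 : 1 / 2 < Δ) (hΔ : Δ < 1) :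
    ∫ x in (Set.univ.pi fun _ : Fin m => Icc (0:ℝ) 1),
        max (1 - Δ - Δ * (Finset.univ.sup' ⟨⟨0, by omega⟩, Finset.mem_univ _⟩ x
          - Finset.univ.inf' ⟨⟨0, by omega⟩, Finset.mem_univ _⟩ x)) 0
      = ((1 - Δ) / Δ) ^ m * (1 - 2 * m * (1 - Δ) / (m + 1)) := by
  have : Nonempty (Fin m) := ⟨⟨0, by omega⟩⟩
  have hΔpos : 0 < Δ := by linarith
  set r := (1 - Δ) / Δ with hr
  have hr₀ : 0 ≤ r := div_nonneg (by linarith) hΔpos.le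
  have hr₁ : r ≤ 1 := by rw [hr, div_le_one hΔpos]; linarith
  have hcont : Continuous fun x : Fin m → ℝ =>
      max (1 - Δ - Δ * (Finset.univ.sup' Finset.univ_nonempty x
        - Finset.univ.inf' Finset.univ_nonempty x)) 0 := by
    fun_prop
  refine (integral_eq_lintegral_of_nonneg_ae (ae_of_all _ fun x => le_max_right _ _)
    hcont.aestronglyMeasurable).trans ?_
  simp only [Pi.zero_apply, ofReal_max_one_sub_sub_mul_eq_mul_volume_Icc hΔpos]
  rw [lintegral_const_mul' _ _ ENNReal.ofReal_ne_top,
    lintegral_volume_Icc_sup'_sub_inf' measurableSet_Icc, Fintype.card_fin,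
    lintegral_volume_Icc_inter_Icc_pow hr₀ hr₁ (by omega), ENNReal.toReal_mul,
    ENNReal.toReal_ofReal hΔpos.le, ENNReal.toReal_ofReal (by
      have := sub_nonneg.2 hr₁
      positivity)]
  rw [hr, pow_succ]
  field_simp
  ring
end

section
/- Let S = (S_1, ..., S_d) with S_w > 0 and let F_S(y) = (Σ_w S_w y^{1/S_w}) / (Σ_w S_w) for y ∈ [0,1]. Then for any fixed y ∈ [0,1], the map S ↦ F_S(y) is Schur-convex: if S is majorized by S', then F_S(y) ≤ F_{S'}(y). -/
/-!
For `0 < y ≤ 1` the map `s ↦ s * y ^ (1 / s)` is the perspective `s * f (1 / s)` of the convex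
function `f u = y ^ u`, hence convex on `(0, ∞)`; for `y = 0` it vanishes there. Majorization
fixes the total `∑ S_w`, so the denominators agree and the claim is Karamata's inequality for this
function. Karamata's inequality `∑ φ (x_i) ≤ ∑ φ (y_i)`, for convex `φ` and `x` majorized by `y`,
follows by listing `x` in decreasing order: the right derivatives `c_i` of `φ` at the `x_i` then
decrease, the tangent-line bound gives `∑ φ (y_i) - ∑ φ (x_i) ≥ ∑ c_i (y_i - x_i)`, and Abel
summation turns the partial-sum inequalities of majorization into nonnegativity of the right-hand
side.
-/

open Finset

/-- The sum of the `k` largest entries of `x`, realized as the supremum of sums of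
`x` over subsets of cardinality `k`. -/
noncomputable def kLargestSum {d : ℕ} (x : Fin d → ℝ) (k : ℕ) : ℝ :=
  sSup {t : ℝ | ∃ s : Finset (Fin d), s.card = k ∧ t = ∑ i ∈ s, x i}

/-- `x` is majorized by `y`: for every `k`, the sum of the `k` largest entries of `x`
is at most that of `y`, and the total sums agree. -/
def MajorizedBy {d : ℕ} (x y : Fin d → ℝ) : Prop :=
  (∀ k : ℕ, k ≤ d → kLargestSum x k ≤ kLargestSum y k) ∧ ∑ i, x i = ∑ i, y i

lemma sum_mul_nonneg_of_antitoneOn {n : ℕ} {c g : ℕ → ℝ} (hc : AntitoneOn c (Set.Iio n))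
    (hg : ∀ k ≤ n, 0 ≤ ∑ i ∈ range k, g i) (hgn : ∑ i ∈ range n, g i = 0) :
    0 ≤ ∑ i ∈ range n, c i * g i := by
  simp only [← smul_eq_mul (a := c _)]
  rw [sum_range_by_parts, hgn, smul_zero, zero_sub, neg_nonneg]
  refine sum_nonpos fun i hi ↦ ?_
  have hi : i + 1 < n := Nat.add_lt_of_lt_sub (mem_range.1 hi)
  exact mul_nonpos_of_nonpos_of_nonneg
    (sub_nonpos.2 (hc (Nat.lt_of_succ_lt hi) hi i.le_succ)) (hg _ hi.le)

namespace ConvexOn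

variable {S : Set ℝ} {φ : ℝ → ℝ}

lemma add_rightDeriv_mul_sub_le (hφ : ConvexOn ℝ S φ) {a b : ℝ} (ha : a ∈ interior S)
    (hb : b ∈ S) : φ a + derivWithin φ (Set.Ioi a) a * (b - a) ≤ φ b := by
  rcases lt_trichotomy a b with hab | rfl | hab
  · have h := hφ.rightDeriv_le_slope_of_mem_interior ha hb hab
    rw [slope_def_field, le_div_iff₀ (sub_pos.2 hab)] at h
    linarith
  · simp
  · have hleft := hφ.slope_le_leftDeriv_of_mem_interior hb ha hab
    rw [slope_def_field, div_le_iff₀ (sub_pos.2 hab)] at hleft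
    have hright := mul_le_mul_of_nonneg_right (hφ.leftDeriv_le_rightDeriv_of_mem_interior ha)
      (sub_pos.2 hab).le
    linarith

theorem sum_le_sum_of_partialSums_le (hφ : ConvexOn ℝ S φ) {n : ℕ} {x y : ℕ → ℝ}
    (hx : AntitoneOn x (Set.Iio n)) (hxS : ∀ i < n, x i ∈ interior S) (hyS : ∀ i < n, y i ∈ S)
    (hpartial : ∀ k ≤ n, ∑ i ∈ range k, x i ≤ ∑ i ∈ range k, y i)
    (htotal : ∑ i ∈ range n, x i = ∑ i ∈ range n, y i) :
    ∑ i ∈ range n, φ (x i) ≤ ∑ i ∈ range n, φ (y i) := by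
  set c : ℕ → ℝ := fun i ↦ derivWithin φ (Set.Ioi (x i)) (x i)
  have hc : AntitoneOn c (Set.Iio n) := fun i hi j hj hij ↦
    hφ.monotoneOn_rightDeriv (hxS j hj) (hxS i hi) (hx hi hj hij)
  have habel : 0 ≤ ∑ i ∈ range n, c i * (y i - x i) :=
    sum_mul_nonneg_of_antitoneOn hc
      (fun k hk ↦ by simpa [sum_sub_distrib] using hpartial k hk)
      (by rw [sum_sub_distrib, htotal, sub_self])
  calc ∑ i ∈ range n, φ (x i)
      ≤ ∑ i ∈ range n, φ (x i) + ∑ i ∈ range n, c i * (y i - x i) := le_add_of_nonneg_right habel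
    _ = ∑ i ∈ range n, (φ (x i) + c i * (y i - x i)) := sum_add_distrib.symm
    _ ≤ ∑ i ∈ range n, φ (y i) := sum_le_sum fun i hi ↦
        hφ.add_rightDeriv_mul_sub_le (hxS i (mem_range.1 hi)) (hyS i (mem_range.1 hi))

end ConvexOn

lemma Fin.val_le_orderEmbedding {k d : ℕ} (e : Fin k ↪o Fin d) (j : Fin k) :
    (j : ℕ) ≤ e j := by
  have hsub : (Finset.Iio j).map e.toEmbedding ⊆ Finset.Iio (e j) := by
    intro i hi
    obtain ⟨j', hj', rfl⟩ := Finset.mem_map.1 hi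
    simpa using Finset.mem_Iio.1 hj'
  simpa using Finset.card_le_card hsub

section Majorization

variable {d : ℕ}

lemma Antitone.sum_le_sum_castLE {u : Fin d → ℝ} (hu : Antitone u) {k : ℕ} (hk : k ≤ d)
    {s : Finset (Fin d)} (hs : s.card = k) :
    ∑ i ∈ s, u i ≤ ∑ j : Fin k, u (Fin.castLE hk j) := by
  rw [← s.map_orderEmbOfFin_univ hs, sum_map]
  exact sum_le_sum fun j _ ↦ hu (Fin.val_le_orderEmbedding _ j)

lemma Antitone.kLargestSum_eq {u : Fin d → ℝ} (hu : Antitone u) {k : ℕ} (hk : k ≤ d) :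
    kLargestSum u k = ∑ j : Fin k, u (Fin.castLE hk j) := by
  have hinit : ∑ j : Fin k, u (Fin.castLE hk j) ∈
      {t : ℝ | ∃ s : Finset (Fin d), s.card = k ∧ t = ∑ i ∈ s, u i} :=
    ⟨univ.map (Fin.castLEEmb hk), by simp, by simp [sum_map]⟩
  refine le_antisymm (csSup_le ⟨_, hinit⟩ ?_) (le_csSup ?_ hinit)
  · rintro _ ⟨s, hs, rfl⟩
    exact hu.sum_le_sum_castLE hk hs
  · refine ((Set.finite_range fun s : Finset (Fin d) ↦ ∑ i ∈ s, u i).subset ?_).bddAbove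
    rintro _ ⟨s, -, rfl⟩
    exact ⟨s, rfl⟩

lemma kLargestSum_comp_perm (v : Fin d → ℝ) (σ : Equiv.Perm (Fin d)) (k : ℕ) :
    kLargestSum (v ∘ σ) k = kLargestSum v k := by
  unfold kLargestSum
  congr 1
  ext t
  constructor
  · rintro ⟨s, hs, rfl⟩
    exact ⟨s.map σ.toEmbedding, by simpa using hs, by simp [sum_map]⟩
  · rintro ⟨s, hs, rfl⟩
    exact ⟨s.map σ.symm.toEmbedding, by simpa using hs, by simp [sum_map]⟩

/-- A decreasing rearrangement of `v` as a sequence indexed by `ℕ`, padded with `0` from `d` on. -/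
noncomputable def sortedDesc (v : Fin d → ℝ) : ℕ → ℝ :=
  Function.extend Fin.val (v ∘ Tuple.sort (OrderDual.toDual ∘ v)) 0

lemma exists_perm_sortedDesc_eq (v : Fin d → ℝ) : ∃ σ : Equiv.Perm (Fin d),
    Antitone (v ∘ σ) ∧ ∀ i : Fin d, sortedDesc v i = v (σ i) :=
  ⟨_, monotone_toDual_comp_iff.1 (Tuple.monotone_sort _),
    Fin.val_injective.extend_apply _ _⟩

lemma sum_range_sortedDesc (v : Fin d → ℝ) {k : ℕ} (hk : k ≤ d) :
    ∑ i ∈ range k, sortedDesc v i = kLargestSum v k := by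
  obtain ⟨σ, hσ, hv⟩ := exists_perm_sortedDesc_eq v
  rw [← kLargestSum_comp_perm v σ, hσ.kLargestSum_eq hk, ← Fin.sum_univ_eq_sum_range]
  exact sum_congr rfl fun j _ ↦ hv (Fin.castLE hk j)

lemma sum_range_sortedDesc_comp (v : Fin d → ℝ) (f : ℝ → ℝ) :
    ∑ i ∈ range d, f (sortedDesc v i) = ∑ w, f (v w) := by
  obtain ⟨σ, -, hv⟩ := exists_perm_sortedDesc_eq v
  rw [← Fin.sum_univ_eq_sum_range (fun i ↦ f (sortedDesc v i)),
    ← Equiv.sum_comp σ (fun w ↦ f (v w))]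
  exact sum_congr rfl fun w _ ↦ congrArg f (hv w)

lemma antitoneOn_sortedDesc (v : Fin d → ℝ) : AntitoneOn (sortedDesc v) (Set.Iio d) := by
  obtain ⟨σ, hσ, hv⟩ := exists_perm_sortedDesc_eq v
  intro i (hi : i < d) j (hj : j < d) hij
  simpa only [Function.comp_apply, hv ⟨i, hi⟩, hv ⟨j, hj⟩] using
    hσ (show (⟨i, hi⟩ : Fin d) ≤ ⟨j, hj⟩ from hij)

lemma sortedDesc_mem_of_forall_mem {v : Fin d → ℝ} {S : Set ℝ} (hv : ∀ w, v w ∈ S) {i : ℕ}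
    (hi : i < d) : sortedDesc v i ∈ S := by
  obtain ⟨σ, -, hσv⟩ := exists_perm_sortedDesc_eq v
  simpa only [hσv ⟨i, hi⟩] using hv (σ ⟨i, hi⟩)

theorem ConvexOn.sum_le_sum_of_majorizedBy {S : Set ℝ} {φ : ℝ → ℝ} (hφ : ConvexOn ℝ S φ)
    {x y : Fin d → ℝ} (hxS : ∀ w, x w ∈ interior S) (hyS : ∀ w, y w ∈ S)
    (hxy : MajorizedBy x y) : ∑ w, φ (x w) ≤ ∑ w, φ (y w) := by
  simp only [← sum_range_sortedDesc_comp]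
  refine hφ.sum_le_sum_of_partialSums_le (antitoneOn_sortedDesc x)
    (fun _ ↦ sortedDesc_mem_of_forall_mem hxS) (fun _ ↦ sortedDesc_mem_of_forall_mem hyS)
    (fun k hk ↦ ?_) ?_
  · simpa only [sum_range_sortedDesc _ hk] using hxy.1 k hk
  · exact (sum_range_sortedDesc_comp x id).trans
      (hxy.2.trans (sum_range_sortedDesc_comp y id).symm)

end Majorization

lemma ConvexOn.mul_comp_inv {φ : ℝ → ℝ} (hφ : ConvexOn ℝ (Set.Ioi 0) φ) :
    ConvexOn ℝ (Set.Ioi 0) fun s ↦ s * φ s⁻¹ := by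
  refine ⟨convex_Ioi 0, fun a (ha : 0 < a) b (hb : 0 < b) α β hα hβ hαβ ↦ ?_⟩
  simp only [smul_eq_mul]
  set c := α * a + β * b
  have hc : 0 < c := by
    rcases hα.eq_or_lt with rfl | hα
    · simp only [zero_add] at hαβ; simp [c, hαβ, hb]
    · positivity
  -- `c⁻¹` is the convex combination of `a⁻¹` and `b⁻¹` with weights `α a / c` and `β b / c`.
  have hconv := hφ.2 (inv_pos.2 ha) (inv_pos.2 hb) (by positivity : 0 ≤ α * a / c)
    (by positivity : 0 ≤ β * b / c) (by rw [← add_div, div_self hc.ne'])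
  have hinv : α * a / c * a⁻¹ + β * b / c * b⁻¹ = c⁻¹ := by
    field_simp
    exact hαβ
  simp only [smul_eq_mul, hinv] at hconv
  calc c * φ c⁻¹ ≤ c * (α * a / c * φ a⁻¹ + β * b / c * φ b⁻¹) := by gcongr
    _ = α * (a * φ a⁻¹) + β * (b * φ b⁻¹) := by field_simp

lemma convexOn_rpow_left_Ioi {b : ℝ} (hb : 0 ≤ b) :
    ConvexOn ℝ (Set.Ioi 0) fun x : ℝ ↦ b ^ x := by
  rcases hb.eq_or_lt with rfl | hb
  · exact (convexOn_const 0 (convex_Ioi 0)).congr fun x hx ↦ (Real.zero_rpow (ne_of_gt hx)).symm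
  · exact (convexOn_rpow_left hb).subset (Set.subset_univ _) (convex_Ioi 0)

/-- Schur-convexity of `S ↦ F_S(y) = (Σ_w S_w y^{1/S_w}) / (Σ_w S_w)` for fixed
`y ∈ [0,1]`: if `S` is majorized by `S'`, then `F_S(y) ≤ F_{S'}(y)`. -/
theorem stmt8 {d : ℕ} (S S' : Fin d → ℝ)
    (hS : ∀ w, 0 < S w) (hS' : ∀ w, 0 < S' w)
    (hmaj : MajorizedBy S S')
    (y : ℝ) (hy : y ∈ Set.Icc (0:ℝ) 1) :
    (∑ w, S w * y ^ (1 / S w)) / (∑ w, S w)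
      ≤ (∑ w, S' w * y ^ (1 / S' w)) / (∑ w, S' w) := by
  rw [← hmaj.2]
  refine div_le_div_of_nonneg_right ?_ (sum_nonneg fun w _ ↦ (hS w).le)
  have hφ := (convexOn_rpow_left_Ioi hy.1).mul_comp_inv
  simpa only [one_div] using hφ.sum_le_sum_of_majorizedBy
    (fun w ↦ by rw [interior_Ioi]; exact hS w) hS' hmaj
end

section
/- Fix integers m ≥ 2 (effective unit size) and Δ ∈ (0, 1/2]. Define K_Δ = {S ∈ ℝ^d : 0 ≤ S_w ≤ 1-Δ for all w, (1-Δ)/(1 + Δ/(m-1)) ≤ Σ_w S_w ≤ 1, and max_w S_w/(1-Δ) ≤ 1 - (1 - Σ_w S_w)/m}. Then K_Δ is a convex polytope whose extreme points are exactly the coordinate permutations of P* = (1-Δ, Δ, 0, ..., 0) and S* = ((1-Δ)/(1 + Δ/(m-1)), 0, ..., 0). -/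
/-!
`K_Δ` is cut out by `0 ≤ S_w ≤ c (Σ S)` and `L ≤ Σ S ≤ 1`, where `L = (1-Δ)/(1+Δ/(m-1))` and
`c s = (1-Δ)(m-1+s)/m` is affine; the bound `S_w ≤ 1-Δ` follows from `S_w ≤ c (Σ S) ≤ c 1`.

At an extreme point `x`, a direction `v` that keeps every tight constraint tight must vanish, since
`x ± t v` stays in `K_Δ` for small `t`. Moving two coordinates lying strictly between `0` and the
cap in opposite directions shows that there is at most one such coordinate; raising it together
with all capped coordinates (which the cap then follows) shows that it forces `Σ x ∈ {L, 1}`.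
Counting with `c L = L` and `c 1 = 1-Δ` leaves only the permutations of `P*` and `S*`.

Conversely, `K_Δ` and hence its set of extreme points are permutation invariant. By Krein–Milman,
if no permutation of `P*` were extreme then `K_Δ` would lie in the hyperplane `Σ S = L`, which `P*`
does not; symmetrically for `S*` and `Σ S = 1`. As there are finitely many extreme points,
`K_Δ = conv E`.
-/

open Set Filter Topology Finset

lemma eq_zero_of_mem_extremePoints_of_eventually {E : Type*} [AddCommGroup E] [Module ℝ E]
    {K : Set E} {x v : E} (hx : x ∈ K.extremePoints ℝ)
    (h : ∀ᶠ t in 𝓝 (0 : ℝ), x + t • v ∈ K) : v = 0 := by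
  have hneg : ∀ᶠ t in 𝓝 (0 : ℝ), x + (-t) • v ∈ K :=
    (continuous_neg.tendsto' 0 0 neg_zero).eventually h
  obtain ⟨t, ht, hpos, hneg⟩ := (h.and hneg).exists_gt
  have hmid : x ∈ openSegment ℝ (x + (-t) • v) (x + t • v) :=
    ⟨1 / 2, 1 / 2, by norm_num, by norm_num, by norm_num, by module⟩
  simpa [ht.ne'] using hx.2 hneg hpos hmid

lemma eventually_add_mul_nonpos {a b : ℝ} (ha : a ≤ 0) (hb : a = 0 → b = 0) :
    ∀ᶠ t in 𝓝 (0 : ℝ), a + t * b ≤ 0 := by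
  rcases ha.lt_or_eq with ha | rfl
  · have : Tendsto (fun t => a + t * b) (𝓝 0) (𝓝 a) := by
      simpa using ((tendsto_id (x := 𝓝 (0:ℝ))).mul_const b).const_add a
    exact (this.eventually (gt_mem_nhds ha)).mono fun t ht => ht.le
  · simp [hb rfl]

lemma comp_perm_mem_extremePoints {ι : Type*} {K : Set (ι → ℝ)}
    (hK : ∀ σ : Equiv.Perm ι, ∀ y ∈ K, y ∘ σ ∈ K) {x : ι → ℝ} (hx : x ∈ K.extremePoints ℝ)
    (σ : Equiv.Perm ι) : x ∘ σ ∈ K.extremePoints ℝ := by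
  let f := LinearEquiv.funCongrLeft ℝ ℝ σ
  have hf (y : ι → ℝ) : f y = y ∘ σ := rfl
  have hfK : f '' K = K := by
    refine (image_subset_iff.2 fun y hy => hK σ y hy).antisymm fun y hy =>
      ⟨y ∘ σ.symm, hK _ y hy, ?_⟩
    change y ∘ σ.symm ∘ σ = y
    rw [Equiv.symm_comp_self, Function.comp_id]
  rw [← hf, ← hfK, ← image_extremePoints]
  exact mem_image_of_mem f hx

lemma subset_of_extremePoints_subset {E : Type*} [AddCommGroup E] [Module ℝ E]
    [TopologicalSpace E] [T2Space E] [IsTopologicalAddGroup E] [ContinuousSMul ℝ E]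
    [LocallyConvexSpace ℝ E]
    {K C : Set E} (hK : IsCompact K) (hKc : Convex ℝ K) (hC : IsClosed C) (hCc : Convex ℝ C)
    (h : K.extremePoints ℝ ⊆ C) : K ⊆ C := by
  rw [← closure_convexHull_extremePoints hK hKc]
  exact closure_minimal (convexHull_min h hCc) hC

lemma range_comp_subset_extremePoints {ι : Type*} {K : Set (ι → ℝ)} (hK : IsCompact K)
    (hKc : Convex ℝ K) (hperm : ∀ σ : Equiv.Perm ι, ∀ y ∈ K, y ∘ σ ∈ K) {x : ι → ℝ} (hx : x ∈ K)
    {C : Set (ι → ℝ)} (hC : IsClosed C) (hCc : Convex ℝ C) (hxC : x ∉ C)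
    (h : K.extremePoints ℝ ⊆ range (fun σ : Equiv.Perm ι => x ∘ σ) ∪ C) :
    range (fun σ : Equiv.Perm ι => x ∘ σ) ⊆ K.extremePoints ℝ := by
  have hxe : x ∈ K.extremePoints ℝ := by
    by_contra hxe
    refine hxC (subset_of_extremePoints_subset hK hKc hC hCc (fun y hy => ?_) hx)
    refine (h hy).resolve_left ?_
    rintro ⟨σ, rfl⟩
    exact hxe (by simpa [Function.comp_assoc] using comp_perm_mem_extremePoints hperm hy σ.symm)
  rintro _ ⟨σ, rfl⟩
  exact comp_perm_mem_extremePoints hperm hxe σ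

lemma exists_perm_apply_eq_apply_eq {ι : Type*} [DecidableEq ι] {a b i j : ι} (hab : a ≠ b)
    (hij : i ≠ j) : ∃ σ : Equiv.Perm ι, σ a = i ∧ σ b = j := by
  set τ := Equiv.swap a i
  have hτ : τ b ≠ i := fun h => hab (τ.injective ((Equiv.swap_apply_left a i).trans h.symm))
  refine ⟨τ.trans (Equiv.swap (τ b) j), ?_, ?_⟩
  · simp only [Equiv.trans_apply, τ, Equiv.swap_apply_left]
    exact Equiv.swap_apply_of_ne_of_ne hτ.symm hij
  · simp only [Equiv.trans_apply, Equiv.swap_apply_left]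

lemma single_add_single_mem_range {ι : Type*} [DecidableEq ι] {a b i j : ι} (hab : a ≠ b)
    (hij : i ≠ j) (p q : ℝ) :
    (Pi.single i p + Pi.single j q : ι → ℝ) ∈
      Set.range (fun σ : Equiv.Perm ι => (Pi.single a p + Pi.single b q) ∘ σ) := by
  obtain ⟨σ, ha, hb⟩ := exists_perm_apply_eq_apply_eq hab hij
  refine ⟨σ.symm, ?_⟩
  simp [Pi.add_comp, Pi.single_comp_equiv, ha, hb]

lemma single_mem_range {ι : Type*} [DecidableEq ι] (a i : ι) (p : ℝ) :
    Pi.single i p ∈ Set.range (fun σ : Equiv.Perm ι => Pi.single a p ∘ σ) :=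
  ⟨Equiv.swap a i, by simp [Pi.single_comp_equiv]⟩

section Finite

variable {ι : Type*} [Fintype ι]

lemma sum_eq_card_mul_add_sum [DecidableEq ι] (x : ι → ℝ) (c : ℝ) :
    ∑ w, x w = #{w | x w = c} * c + ∑ w with x w ≠ c, x w := by
  rw [← Finset.sum_filter_add_sum_filter_not univ (fun w => x w = c),
    Finset.sum_congr rfl fun w hw => (mem_filter.1 hw).2, sum_const, nsmul_eq_mul]

lemma eq_sum_single_add_sum_single [DecidableEq ι] (x : ι → ℝ) (c : ℝ) :
    x = ∑ j with x j = c, Pi.single j c + ∑ j with x j ≠ c, Pi.single j (x j) := by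
  conv_lhs => rw [← Finset.univ_sum_single x]
  rw [← Finset.sum_filter_add_sum_filter_not univ (fun j => x j = c)]
  congr 1
  exact Finset.sum_congr rfl fun j hj => by rw [(mem_filter.1 hj).2]

lemma isClosed_setOf_sum_eq (c : ℝ) : IsClosed {y : ι → ℝ | ∑ w, y w = c} :=
  isClosed_eq (by fun_prop) continuous_const

lemma convex_setOf_sum_eq (c : ℝ) : Convex ℝ {y : ι → ℝ | ∑ w, y w = c} :=
  convex_hyperplane ⟨fun y z => Finset.sum_add_distrib, fun r y => by simp [Finset.mul_sum]⟩ c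

end Finite

lemma natCast_mul_add_ne_self {k : ℕ} {c r : ℝ} (hr : 0 < r) (hrc : r < c) :
    (k : ℝ) * c + r ≠ c := by
  rcases Nat.eq_zero_or_pos k with rfl | hk
  · simpa using hrc.ne
  · have : (1 : ℝ) ≤ k := by exact_mod_cast hk
    nlinarith

lemma eq_one_of_natCast_mul_add_eq_one {k : ℕ} {c r : ℝ} (hc : 1 / 2 ≤ c) (hc1 : c ≤ 1)
    (hr : 0 < r) (hrc : r < c) (h : k * c + r = 1) : k = 1 := by
  have h2 : (k : ℝ) < 2 := by by_contra! h'; nlinarith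
  have h0 : (0 : ℝ) < k := by by_contra! h'; nlinarith
  have : k < 2 := by exact_mod_cast h2
  have : 0 < k := by exact_mod_cast h0
  omega

namespace KDelta

variable {ι : Type*} [Fintype ι]

noncomputable def lowerSum (m Δ : ℝ) : ℝ := (1 - Δ) / (1 + Δ / (m - 1))

noncomputable def cap (m Δ s : ℝ) : ℝ := (1 - Δ) * (m - 1 + s) / m

variable (ι) in
def polytope (m Δ : ℝ) : Set (ι → ℝ) :=
  {S | (∀ w, 0 ≤ S w ∧ S w ≤ cap m Δ (∑ w, S w)) ∧ lowerSum m Δ ≤ ∑ w, S w ∧ ∑ w, S w ≤ 1}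

section Arithmetic

variable {m Δ : ℝ}

lemma mul_cap (hm : m ≠ 0) (s : ℝ) : m * cap m Δ s = (1 - Δ) * (m - 1 + s) := by
  rw [cap]; field_simp

lemma cap_add_mul (hm : m ≠ 0) (s t σ : ℝ) :
    cap m Δ (s + t * σ) = cap m Δ s + t * ((1 - Δ) / m * σ) := by
  simp only [cap]; field_simp; ring

lemma cap_one (hm : m ≠ 0) : cap m Δ 1 = 1 - Δ := by
  rw [cap]; field_simp; ring

lemma lowerSum_mul (hm : 1 < m) (hΔ : 0 ≤ Δ) :
    lowerSum m Δ * (m - 1 + Δ) = (1 - Δ) * (m - 1) := by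
  have : m - 1 ≠ 0 := by linarith
  have : m - 1 + Δ ≠ 0 := by linarith
  rw [lowerSum]; field_simp

lemma cap_lowerSum (hm : 1 < m) (hΔ : 0 ≤ Δ) : cap m Δ (lowerSum m Δ) = lowerSum m Δ := by
  have h := lowerSum_mul hm hΔ
  have h' := mul_cap (Δ := Δ) (by linarith : m ≠ 0) (lowerSum m Δ)
  have : m * cap m Δ (lowerSum m Δ) = m * lowerSum m Δ := by linarith
  exact mul_left_cancel₀ (by linarith) this

lemma lowerSum_pos (hm : 1 < m) (hΔ : 0 ≤ Δ) (hΔ1 : Δ < 1) : 0 < lowerSum m Δ := by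
  have h := lowerSum_mul hm hΔ
  by_contra! h'
  nlinarith

lemma lowerSum_lt_one (hm : 1 < m) (hΔ : 0 < Δ) : lowerSum m Δ < 1 := by
  have h := lowerSum_mul hm hΔ.le
  by_contra! h'
  nlinarith

lemma eq_one_and_eq_lowerSum_or_eq_two {k : ℕ} {s M : ℝ} (hm : 1 < m) (hΔ0 : 0 < Δ)
    (hΔ : Δ ≤ 1 / 2) (hmM : m * M = (1 - Δ) * (m - 1 + s)) (hs : s = k * M)
    (hL : lowerSum m Δ ≤ s) (h1 : s ≤ 1) :
    (k = 1 ∧ M = lowerSum m Δ) ∨ (k = 2 ∧ Δ = 1 / 2 ∧ M = 1 - Δ) := by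
  have hLpos := lowerSum_pos hm hΔ0.le (by linarith)
  rcases Nat.lt_or_ge k 2 with hk | hk
  · have hk1 : k = 1 := by
      have : k ≠ 0 := by rintro rfl; simp only [CharP.cast_eq_zero, zero_mul] at hs; linarith
      omega
    subst hk1
    rw [Nat.cast_one, one_mul] at hs
    subst hs
    have : (s - lowerSum m Δ) * (m - 1 + Δ) = 0 := by
      linear_combination hmM - lowerSum_mul hm hΔ0.le
    exact Or.inl ⟨rfl, sub_eq_zero.1 ((mul_eq_zero.1 this).resolve_right (by linarith))⟩
  · have hk2 : (2 : ℝ) ≤ k := by exact_mod_cast hk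
    have hMpos : 0 < M := by nlinarith
    have hM : M = 1 - Δ := by
      have h1 : M ≤ 1 - Δ := by nlinarith
      have h2 : 1 - Δ ≤ M := by nlinarith [mul_le_mul_of_nonneg_right hk2 hMpos.le]
      linarith
    subst hM
    have hk2' : k = 2 := le_antisymm (by exact_mod_cast (show (k : ℝ) ≤ 2 by nlinarith)) hk
    subst hk2'
    exact Or.inr ⟨rfl, by push_cast at hs; nlinarith, rfl⟩

end Arithmetic

section Polytope

variable {m Δ : ℝ}

lemma setOf_eq_polytope (hm : 0 < m) (hΔ : Δ < 1) :
    {S : ι → ℝ | (∀ w, 0 ≤ S w ∧ S w ≤ 1 - Δ) ∧ lowerSum m Δ ≤ ∑ w, S w ∧ ∑ w, S w ≤ 1 ∧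
      ∀ w, S w / (1 - Δ) ≤ 1 - (1 - ∑ w', S w') / m} = polytope ι m Δ := by
  ext S
  have hcap : ∀ w, S w / (1 - Δ) ≤ 1 - (1 - ∑ w', S w') / m ↔ S w ≤ cap m Δ (∑ w, S w) := by
    intro w
    have : (1 - (1 - ∑ w', S w') / m) * (1 - Δ) = cap m Δ (∑ w, S w) := by
      rw [cap]; field_simp; ring
    rw [div_le_iff₀ (by linarith), this]
  simp only [polytope, mem_ofPred_eq, hcap]
  constructor
  · rintro ⟨h01, hL, h1, hc⟩
    exact ⟨fun w => ⟨(h01 w).1, hc w⟩, hL, h1⟩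
  · rintro ⟨h0c, hL, h1⟩
    refine ⟨fun w => ⟨(h0c w).1, ?_⟩, hL, h1, fun w => (h0c w).2⟩
    have := mul_cap (Δ := Δ) hm.ne' (∑ w, S w)
    have : cap m Δ (∑ w, S w) * m ≤ (1 - Δ) * m := by nlinarith
    linarith [(h0c w).2, le_of_mul_le_mul_right this hm]

lemma convex_polytope (hm : m ≠ 0) : Convex ℝ (polytope ι m Δ) := by
  rintro y ⟨hy, hyL, hy1⟩ z ⟨hz, hzL, hz1⟩ a b ha hb hab
  have hsum : ∑ w, (a • y + b • z) w = a * ∑ w, y w + b * ∑ w, z w := by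
    simp [Finset.sum_add_distrib, Finset.mul_sum]
  have hcap : cap m Δ (a * ∑ w, y w + b * ∑ w, z w) =
      a * cap m Δ (∑ w, y w) + b * cap m Δ (∑ w, z w) := by
    rw [← sub_eq_of_eq_add' hab.symm]; simp only [cap]; field_simp; ring
  refine ⟨fun w => ?_, ?_, ?_⟩ <;> rw [hsum]
  · rw [hcap]; simp only [Pi.add_apply, Pi.smul_apply, smul_eq_mul]
    exact ⟨by nlinarith [hy w, hz w], by nlinarith [hy w, hz w]⟩
  · nlinarith
  · nlinarith

lemma isCompact_polytope : IsCompact (polytope ι m Δ) := by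
  have hclosed : IsClosed (polytope ι m Δ) := by
    simp only [polytope, ofPred_and, ofPred_forall]
    refine (isClosed_iInter fun w => (isClosed_le ?_ ?_).inter (isClosed_le ?_ ?_)).inter
      ((isClosed_le ?_ ?_).inter (isClosed_le ?_ ?_)) <;> (try simp only [cap]) <;> fun_prop
  refine (isCompact_univ_pi fun _ => isCompact_Icc (a := 0) (b := 1)).of_isClosed_subset
    hclosed ?_
  rintro S ⟨hS, -, hS1⟩ w -
  exact ⟨(hS w).1, (Finset.single_le_sum (fun w _ => (hS w).1) (Finset.mem_univ w)).trans hS1⟩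

lemma comp_perm_mem_polytope :
    ∀ σ : Equiv.Perm ι, ∀ S ∈ polytope ι m Δ, S ∘ σ ∈ polytope ι m Δ := by
  rintro σ S ⟨h, hL, h1⟩
  have hsum : ∑ w, (S ∘ σ) w = ∑ w, S w := Equiv.sum_comp σ S
  exact ⟨fun w => by rw [hsum]; exact h (σ w), hsum ▸ hL, hsum ▸ h1⟩

lemma single_add_single_mem_polytope [DecidableEq ι] {a b : ι} (hab : a ≠ b) (hm : 1 < m)
    (hΔ0 : 0 < Δ) (hΔ : Δ ≤ 1 / 2) : Pi.single a (1 - Δ) + Pi.single b Δ ∈ polytope ι m Δ := by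
  have hsum : ∑ w, (Pi.single a (1 - Δ) + Pi.single b Δ : ι → ℝ) w = 1 := by
    simp [Finset.sum_add_distrib]
  have hL := lowerSum_lt_one hm hΔ0
  refine ⟨fun w => ?_, by rw [hsum]; exact hL.le, hsum.le⟩
  rw [hsum, cap_one (by linarith)]
  by_cases hwa : w = a <;> by_cases hwb : w = b <;> simp [hwa, hwb, hab] <;> (try constructor) <;>
    linarith

lemma single_lowerSum_mem_polytope [DecidableEq ι] (a : ι) (hm : 1 < m) (hΔ0 : 0 < Δ)
    (hΔ1 : Δ < 1) : Pi.single a (lowerSum m Δ) ∈ polytope ι m Δ := by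
  have hsum : ∑ w, (Pi.single a (lowerSum m Δ) : ι → ℝ) w = lowerSum m Δ := by simp
  refine ⟨fun w => ?_, hsum.ge, by rw [hsum]; exact (lowerSum_lt_one hm hΔ0).le⟩
  rw [hsum, cap_lowerSum hm hΔ0.le]
  by_cases hwa : w = a <;> simp [hwa, (lowerSum_pos hm hΔ0.le hΔ1).le]

end Polytope

section Extreme

variable {m Δ : ℝ} {x : ι → ℝ}

lemma eq_zero_of_tight (hm : m ≠ 0) (hx : x ∈ (polytope ι m Δ).extremePoints ℝ) {v : ι → ℝ}
    (hzero : ∀ w, x w = 0 → v w = 0)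
    (hcap : ∀ w, x w = cap m Δ (∑ w, x w) → v w = (1 - Δ) / m * ∑ w, v w)
    (hlow : ∑ w, x w = lowerSum m Δ → ∑ w, v w = 0)
    (hone : ∑ w, x w = 1 → ∑ w, v w = 0) : v = 0 := by
  obtain ⟨hxc, hxL, hx1⟩ := hx.1
  refine eq_zero_of_mem_extremePoints_of_eventually hx ?_
  have hsum (t : ℝ) : ∑ w, (x w + t * v w) = ∑ w, x w + t * ∑ w, v w := by
    rw [Finset.sum_add_distrib, Finset.mul_sum]
  have hcoord (w : ι) : ∀ᶠ t in 𝓝 (0 : ℝ), 0 ≤ x w + t * v w ∧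
      x w + t * v w ≤ cap m Δ (∑ w, x w) + t * ((1 - Δ) / m * ∑ w, v w) := by
    filter_upwards [eventually_add_mul_nonpos (a := -x w) (b := -v w) (by linarith [hxc w])
        (fun h => by simp [hzero w (neg_eq_zero.1 h)]),
      eventually_add_mul_nonpos (a := x w - cap m Δ (∑ w, x w))
        (b := v w - (1 - Δ) / m * ∑ w, v w) (by linarith [hxc w])
        (fun h => by rw [hcap w (sub_eq_zero.1 h), sub_self])] with t h0 hc
    constructor <;> linarith
  filter_upwards [eventually_all.2 hcoord,
    eventually_add_mul_nonpos (a := lowerSum m Δ - ∑ w, x w) (b := -∑ w, v w) (by linarith)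
      (fun h => by rw [hlow (sub_eq_zero.1 h).symm, neg_zero]),
    eventually_add_mul_nonpos (a := ∑ w, x w - 1) (b := ∑ w, v w) (by linarith)
      (fun h => hone (sub_eq_zero.1 h))] with t hc hL h1
  refine ⟨fun w => ?_, ?_, ?_⟩ <;>
    simp only [hsum, cap_add_mul hm, Pi.add_apply, Pi.smul_apply, smul_eq_mul]
  · exact hc w
  · linarith
  · linarith

lemma eq_of_free (hm : m ≠ 0) (hx : x ∈ (polytope ι m Δ).extremePoints ℝ) {i j : ι}
    (hi : 0 < x i) (hi' : x i < cap m Δ (∑ w, x w))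
    (hj : 0 < x j) (hj' : x j < cap m Δ (∑ w, x w)) : i = j := by
  classical
  by_contra hij
  have hsum : ∑ w, (Pi.single i 1 - Pi.single j 1 : ι → ℝ) w = 0 := by
    simp [Finset.sum_sub_distrib]
  have hvanish (w : ι) (hw : x w = 0 ∨ x w = cap m Δ (∑ w, x w)) :
      (Pi.single i 1 - Pi.single j 1 : ι → ℝ) w = 0 := by
    have hwi : w ≠ i := by rintro rfl; rcases hw with hw | hw <;> linarith
    have hwj : w ≠ j := by rintro rfl; rcases hw with hw | hw <;> linarith
    simp [hwi, hwj]
  have hv := eq_zero_of_tight hm hx (v := Pi.single i 1 - Pi.single j 1)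
    (fun w hw => hvanish w (Or.inl hw)) (fun w hw => by rw [hsum, mul_zero, hvanish w (Or.inr hw)])
    (fun _ => hsum) (fun _ => hsum)
  simpa [hij] using congrFun hv i

lemma sum_eq_lowerSum_or_one_of_free (hm : m ≠ 0) (hx : x ∈ (polytope ι m Δ).extremePoints ℝ)
    {i : ι} (hi : 0 < x i) (hi' : x i < cap m Δ (∑ w, x w)) :
    ∑ w, x w = lowerSum m Δ ∨ ∑ w, x w = 1 := by
  classical
  by_contra! hs
  set M := cap m Δ (∑ w, x w)
  -- Raise `x i` by `m - (1 - Δ) k` and each of the `k` capped coordinates by `1 - Δ`: the sum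
  -- rises by `m`, hence the cap by exactly `1 - Δ`.
  set v : ι → ℝ :=
    Pi.single i (m - (1 - Δ) * #{w | x w = M}) + fun w => if x w = M then 1 - Δ else 0
  have hsum : ∑ w, v w = m := by
    simp only [v, Pi.add_apply, Finset.sum_add_distrib, Fintype.sum_pi_single',
      ← Finset.sum_filter, sum_const, nsmul_eq_mul]
    ring
  have hv : v = 0 := by
    refine eq_zero_of_tight hm hx (fun w hw => ?_) (fun w hw => ?_) (fun h => absurd h hs.1)
      (fun h => absurd h hs.2)
    · have hwi : w ≠ i := by rintro rfl; linarith
      simp [v, hwi, hw, (hi.trans hi').ne]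
    · have hwi : w ≠ i := by rintro rfl; linarith
      rw [hsum, div_mul_cancel₀ _ hm]
      simp [v, hwi, hw, M]
  exact hm (by simpa [hv] using hsum.symm)

lemma eq_zero_or_eq_cap_of_free (hm : m ≠ 0) (hx : x ∈ (polytope ι m Δ).extremePoints ℝ)
    {i : ι} (hi : 0 < x i) (hi' : x i < cap m Δ (∑ w, x w)) :
    ∀ w ≠ i, x w = 0 ∨ x w = cap m Δ (∑ w, x w) := by
  obtain ⟨hxc, -, -⟩ := hx.1
  intro w hw
  by_contra! h
  exact hw (eq_of_free hm hx (lt_of_le_of_ne (hxc w).1 h.1.symm) (lt_of_le_of_ne (hxc w).2 h.2)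
    hi hi')

lemma sum_eq_one_of_free (hm : 1 < m) (hΔ0 : 0 ≤ Δ) (hx : x ∈ (polytope ι m Δ).extremePoints ℝ)
    {i : ι} (hi : 0 < x i) (hi' : x i < cap m Δ (∑ w, x w)) : ∑ w, x w = 1 := by
  classical
  have hm0 : m ≠ 0 := by linarith
  refine (sum_eq_lowerSum_or_one_of_free hm0 hx hi hi').resolve_left fun hs => ?_
  have hother := eq_zero_or_eq_cap_of_free hm0 hx hi hi'
  rw [hs, cap_lowerSum hm hΔ0] at hi' hother
  have hsum := sum_eq_card_mul_add_sum x (lowerSum m Δ)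
  rw [sum_eq_single_of_mem i (by simp [hi'.ne]) fun w hw hwi =>
    (hother w hwi).resolve_right (mem_filter.1 hw).2, hs] at hsum
  exact natCast_mul_add_ne_self hi hi' hsum.symm

lemma exists_eq_single_add_single_of_free [DecidableEq ι] (hm : 1 < m) (hΔ0 : 0 < Δ)
    (hΔ : Δ ≤ 1 / 2) (hx : x ∈ (polytope ι m Δ).extremePoints ℝ) {i : ι} (hi : 0 < x i)
    (hi' : x i < cap m Δ (∑ w, x w)) :
    ∃ j, j ≠ i ∧ x = Pi.single j (1 - Δ) + Pi.single i Δ := by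
  have hm0 : m ≠ 0 := by linarith
  have hs := sum_eq_one_of_free hm hΔ0.le hx hi hi'
  have hother := eq_zero_or_eq_cap_of_free hm0 hx hi hi'
  rw [hs, cap_one hm0] at hi' hother
  have hrest (w : ι) (hw : w ∈ ({w | x w ≠ 1 - Δ} : Finset ι)) (hwi : w ≠ i) : x w = 0 :=
    (hother w hwi).resolve_right (mem_filter.1 hw).2
  have hi_mem : i ∈ ({w | x w ≠ 1 - Δ} : Finset ι) := by simp [hi'.ne]
  have hsum := sum_eq_card_mul_add_sum x (1 - Δ)
  rw [sum_eq_single_of_mem i hi_mem hrest, hs] at hsum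
  have hk := eq_one_of_natCast_mul_add_eq_one (by linarith) (by linarith) hi hi' hsum.symm
  have hxi : x i = Δ := by rw [hk, Nat.cast_one] at hsum; linarith
  obtain ⟨j, hj⟩ := card_eq_one.1 hk
  have hxj : x j = 1 - Δ := by simpa using (Finset.ext_iff.1 hj j).2 (mem_singleton_self j)
  refine ⟨j, fun hji => by rw [hji] at hxj; linarith, ?_⟩
  calc x = _ := eq_sum_single_add_sum_single x (1 - Δ)
    _ = _ := by
      rw [hj, sum_singleton, sum_eq_single_of_mem i hi_mem fun w hw hwi => by
        rw [hrest w hw hwi, Pi.single_zero], hxi]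

lemma exists_eq_single_or_eq_single_add_single [DecidableEq ι] (hm : 1 < m) (hΔ0 : 0 < Δ)
    (hΔ : Δ ≤ 1 / 2) (hx : x ∈ polytope ι m Δ) (h : ∀ w, x w = 0 ∨ x w = cap m Δ (∑ w, x w)) :
    (∃ j, x = Pi.single j (lowerSum m Δ)) ∨
      ∃ i j, j ≠ i ∧ x = Pi.single j (1 - Δ) + Pi.single i Δ := by
  obtain ⟨-, hxL, hx1⟩ := hx
  have hmM := mul_cap (Δ := Δ) (by linarith : m ≠ 0) (∑ w, x w)
  generalize cap m Δ (∑ w, x w) = M at h hmM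
  have hrest (j : ι) (hj : j ∈ ({j | x j ≠ M} : Finset ι)) : x j = 0 :=
    (h j).resolve_right (mem_filter.1 hj).2
  have hx_eq : x = ∑ j with x j = M, Pi.single j M := by
    conv_lhs => rw [eq_sum_single_add_sum_single x M]
    exact add_eq_left.2 (sum_eq_zero fun j hj => by rw [hrest j hj, Pi.single_zero])
  have hsum : ∑ w, x w = #{w | x w = M} * M := by
    simpa [Finset.sum_eq_zero hrest] using sum_eq_card_mul_add_sum x M
  rcases eq_one_and_eq_lowerSum_or_eq_two hm hΔ0 hΔ hmM hsum hxL hx1 with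
    ⟨hk, hML⟩ | ⟨hk, hΔ2, hM⟩
  · obtain ⟨j, hj⟩ := card_eq_one.1 hk
    exact Or.inl ⟨j, by rw [hx_eq, hj, sum_singleton, hML]⟩
  · obtain ⟨j, i, hji, hj⟩ := card_eq_two.1 hk
    refine Or.inr ⟨i, j, hji, ?_⟩
    rw [hx_eq, hj, sum_pair hji, ← hM, show Δ = M by linarith]

end Extreme

section Vertices

variable [DecidableEq ι] {m Δ : ℝ}

variable (ι) in
def vertices (a b : ι) (m Δ : ℝ) : Set (ι → ℝ) :=
  Set.range (fun σ : Equiv.Perm ι => (Pi.single a (1 - Δ) + Pi.single b Δ) ∘ σ) ∪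
    Set.range (fun σ : Equiv.Perm ι => Pi.single a (lowerSum m Δ) ∘ σ)

lemma extremePoints_subset_vertices {a b : ι} (hab : a ≠ b) (hm : 1 < m) (hΔ0 : 0 < Δ)
    (hΔ : Δ ≤ 1 / 2) : (polytope ι m Δ).extremePoints ℝ ⊆ vertices ι a b m Δ := by
  intro x hx
  by_cases hfree : ∃ i, 0 < x i ∧ x i < cap m Δ (∑ w, x w)
  · obtain ⟨i, hi, hi'⟩ := hfree
    obtain ⟨j, hji, rfl⟩ := exists_eq_single_add_single_of_free hm hΔ0 hΔ hx hi hi'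
    exact Or.inl (single_add_single_mem_range hab hji _ _)
  · push Not at hfree
    have h (w : ι) : x w = 0 ∨ x w = cap m Δ (∑ w, x w) := by
      obtain ⟨h0, hc⟩ := hx.1.1 w
      rcases h0.lt_or_eq with h0 | h0
      exacts [Or.inr (le_antisymm hc (hfree w h0)), Or.inl h0.symm]
    rcases exists_eq_single_or_eq_single_add_single hm hΔ0 hΔ hx.1 h with
      ⟨j, rfl⟩ | ⟨i, j, hji, rfl⟩
    exacts [Or.inr (single_mem_range a j _), Or.inl (single_add_single_mem_range hab hji _ _)]

theorem extremePoints_polytope {a b : ι} (hab : a ≠ b) (hm : 1 < m) (hΔ0 : 0 < Δ)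
    (hΔ : Δ ≤ 1 / 2) : (polytope ι m Δ).extremePoints ℝ = vertices ι a b m Δ := by
  have hsub := extremePoints_subset_vertices hab hm hΔ0 hΔ
  have hm0 : m ≠ 0 := by linarith
  have hL := lowerSum_lt_one hm hΔ0
  have hsumP : ∑ w, (Pi.single a (1 - Δ) + Pi.single b Δ : ι → ℝ) w = 1 := by
    simp [Finset.sum_add_distrib]
  have hsumS : ∑ w, (Pi.single a (lowerSum m Δ) : ι → ℝ) w = lowerSum m Δ := by simp
  have hP := single_add_single_mem_polytope hab hm hΔ0 hΔ
  have hS := single_lowerSum_mem_polytope a hm hΔ0 (by linarith)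
  refine hsub.antisymm (union_subset ?_ ?_)
  · refine range_comp_subset_extremePoints isCompact_polytope (convex_polytope hm0)
      comp_perm_mem_polytope hP (isClosed_setOf_sum_eq _) (convex_setOf_sum_eq (lowerSum m Δ))
      (fun h => hL.ne' (hsumP.symm.trans h)) (hsub.trans (union_subset_union_right _ ?_))
    rintro _ ⟨σ, rfl⟩
    exact (Equiv.sum_comp σ _).trans hsumS
  · refine range_comp_subset_extremePoints isCompact_polytope (convex_polytope hm0)
      comp_perm_mem_polytope hS (isClosed_setOf_sum_eq _) (convex_setOf_sum_eq 1)
      (fun h => hL.ne (hsumS.symm.trans h)) (hsub.trans ?_)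
    rw [vertices, Set.union_comm]
    refine union_subset_union_right _ ?_
    rintro _ ⟨σ, rfl⟩
    exact (Equiv.sum_comp σ _).trans hsumP

theorem polytope_eq_convexHull_vertices {a b : ι} (hab : a ≠ b) (hm : 1 < m) (hΔ0 : 0 < Δ)
    (hΔ : Δ ≤ 1 / 2) : polytope ι m Δ = convexHull ℝ (vertices ι a b m Δ) := by
  rw [← extremePoints_polytope hab hm hΔ0 hΔ]
  have hfin : ((polytope ι m Δ).extremePoints ℝ).Finite := by
    rw [extremePoints_polytope hab hm hΔ0 hΔ]
    exact (finite_range _).union (finite_range _)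
  rw [← hfin.isClosed_convexHull ℝ |>.closure_eq,
    closure_convexHull_extremePoints isCompact_polytope (convex_polytope (by linarith))]

end Vertices

end KDelta

/-- For `m ≥ 2`, `Δ ∈ (0, 1/2]`, define
`K_Δ = {S ∈ ℝ^d : 0 ≤ S_w ≤ 1-Δ ∀w, (1-Δ)/(1+Δ/(m-1)) ≤ Σ_w S_w ≤ 1,
       max_w S_w/(1-Δ) ≤ 1 - (1 - Σ_w S_w)/m}`.
Then `K_Δ` is a convex polytope whose extreme points are exactly the coordinate
permutations of `P* = (1-Δ, Δ, 0, …, 0)` and `S* = ((1-Δ)/(1+Δ/(m-1)), 0, …, 0)`;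
equivalently `K_Δ = conv(E)` and `extremePoints K_Δ = E`. -/
theorem stmt12 (d m : ℕ) (hd : 2 ≤ d) (hm : 2 ≤ m)
    (Δ : ℝ) (hΔ : Δ ∈ Ioc (0:ℝ) (1 / 2)) :
    let K : Set (Fin d → ℝ) :=
      {S | (∀ w, 0 ≤ S w ∧ S w ≤ 1 - Δ) ∧
        (1 - Δ) / (1 + Δ / ((m : ℝ) - 1)) ≤ ∑ w, S w ∧ (∑ w, S w) ≤ 1 ∧
        (∀ w, S w / (1 - Δ) ≤ 1 - (1 - ∑ w', S w') / (m : ℝ))}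
    let Pstar : Fin d → ℝ :=
      fun i => if i = ⟨0, by omega⟩ then 1 - Δ else if i = ⟨1, by omega⟩ then Δ else 0
    let Sstar : Fin d → ℝ :=
      fun i => if i = ⟨0, by omega⟩ then (1 - Δ) / (1 + Δ / ((m : ℝ) - 1)) else 0
    let E : Set (Fin d → ℝ) :=
      {v | ∃ σ : Equiv.Perm (Fin d), v = Pstar ∘ σ ∨ v = Sstar ∘ σ}
    K = convexHull ℝ E ∧ K.extremePoints ℝ = E := by
  intro K Pstar Sstar E
  obtain ⟨hΔ0, hΔ⟩ := hΔ
  have hm' : (1 : ℝ) < m := by exact_mod_cast hm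
  have hab : (⟨0, by omega⟩ : Fin d) ≠ ⟨1, by omega⟩ := by simp
  have hK : K = KDelta.polytope (Fin d) m Δ := KDelta.setOf_eq_polytope (by linarith) (by linarith)
  have hP : Pstar = Pi.single ⟨0, by omega⟩ (1 - Δ) + Pi.single ⟨1, by omega⟩ Δ := by
    funext i
    simp only [Pstar, Pi.add_apply, Pi.single_apply]
    split_ifs <;> simp_all
  have hS : Sstar = Pi.single ⟨0, by omega⟩ (KDelta.lowerSum m Δ) := by
    funext i
    simp only [Sstar, Pi.single_apply, KDelta.lowerSum]
  have hE : E = KDelta.vertices (Fin d) ⟨0, by omega⟩ ⟨1, by omega⟩ m Δ := by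
    ext v
    simp [E, KDelta.vertices, hP, hS, exists_or, eq_comm]
  rw [hK, hE]
  exact ⟨KDelta.polytope_eq_convexHull_vertices hab hm' hΔ0 hΔ,
    KDelta.extremePoints_polytope hab hm' hΔ0 hΔ⟩
end
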